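/- arXiv:1504.07226 — 2 statements merged into one kernel-verified Lean document; each statement's English description precedes it below -/
import Mathlib

section
/- For every n ≥ 1, the degree-n component of log(∑_{m≥0} p_m) in (𝐒𝐣, ⋄) satisfies: ∑_{k=1}^{n} ((-1)^{k-1}/k) ∑_{(n_1,…,n_k) composition of n} p_{n_1} ⋄ p_{n_2} ⋄ ⋯ ⋄ p_{n_k} = ∑_{I ⊆ [n-1]} ((-1)^{|I|}/(|I|+1)) · D_{⊆I}^n, an identity in the free ℚ-vector space 𝐒𝐣_n with basis Sj_n. Here the inner sum is over all ordered sequences (n_1,…,n_k) of positive integers with n_1+⋯+n_k = n. -/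
open scoped Classical

noncomputable section

/-- Number of distinct letters of `w` smaller than `a`. -/
def rank (w : List ℕ) (a : ℕ) : ℕ := (w.dedup.filter (fun b => b < a)).length

/-- The packing of a word over the alphabet `ℕ` (letters are 0-indexed). -/
def pack (w : List ℕ) : List ℕ := w.map (rank w)

/-- A packed word, i.e. a word equal to its own packing.  Packed words of length `n`
whose set of letters is `{0,…,k-1}` are exactly the surjections `[n] ↠ [k]`
(written with 0-indexed values). -/
def Packed (w : List ℕ) : Prop := pack w = w

/-- The type of surjections, encoded as packed words. -/
abbrev PW := {w : List ℕ // Packed w}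

/-- `𝐒𝐣`, the free `ℚ`-vector space on the set of all surjections. -/
abbrev Sj := PW →₀ ℚ

/-- All lists of length `N` with letters `< N`. -/
def candidates (N : ℕ) : Finset (List ℕ) :=
  Finset.image (fun v : Fin N → Fin N => List.ofFn (fun i => (v i : ℕ))) Finset.univ

/-- The (finite) set of surjections `h` appearing in the product `f ⋄ g`
of two surjections: the packed words `h` of length `|f| + |g|` such that
`pack` of the first `|f|` letters of `h` is `f` and `pack` of the remaining
letters is `g`. -/
def diamondSet (f g : List ℕ) : Finset PW :=
  ((candidates (f.length + g.length)).filter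
    (fun w => Packed w ∧ pack (w.take f.length) = f ∧ pack (w.drop f.length) = g)).subtype Packed

/-- The product of two basis elements of `𝐒𝐣`. -/
def diamondPW (f g : PW) : Sj := ∑ h ∈ diamondSet f.1 g.1, Finsupp.single h 1

/-- The bilinear extension `⋄` of the product of surjections to `𝐒𝐣`. -/
def diamond (F G : Sj) : Sj :=
  F.sum fun f a => G.sum fun g b => (a * b) • diamondPW f g

/-- The empty surjection from `[0] = ∅` to itself. -/
def emptyPW : PW := ⟨[], rfl⟩

/-- The unit of `𝐒𝐣`: the empty surjection. -/
def oneSj : Sj := Finsupp.single emptyPW 1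

/-- Descent set (with positions written 1-indexed, as subsets of `[n-1] = {1,…,n-1}`):
`i ∈ Desc(f)` iff `1 ≤ i ≤ n-1` and `f(i) ≥ f(i+1)`. -/
def descSet (w : List ℕ) : Finset ℕ :=
  (Finset.Icc 1 (w.length - 1)).filter (fun i => w.getD i 0 ≤ w.getD (i - 1) 0)

/-- The (finite) set of all surjections with source `[n]`. -/
def SjWords (n : ℕ) : Finset PW :=
  ((candidates n).filter Packed).subtype Packed

/-- `D^n_{⊆ I}`: the sum of all surjections from `[n]` with descent set contained in `I`. -/
def Dsub (n : ℕ) (I : Finset ℕ) : Sj :=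
  ∑ f ∈ (SjWords n).filter (fun f => descSet f.1 ⊆ I), Finsupp.single f 1

/-- `D^n_I`: the sum of all surjections from `[n]` with descent set equal to `I`. -/
def Deq (n : ℕ) (I : Finset ℕ) : Sj :=
  ∑ f ∈ (SjWords n).filter (fun f => descSet f.1 = I), Finsupp.single f 1

lemma length_filter_lt_range (n i : ℕ) :
    ((List.range n).filter (fun x => x < i)).length = min i n := by
  induction n with
  | zero => simp
  | succ n ih =>
    rw [List.range_succ, List.filter_append, List.length_append, ih]
    by_cases h : n < i
    · simp [h]; omega
    · simp [h]; omega

lemma packed_range (n : ℕ) : Packed (List.range n) := by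
  unfold Packed pack rank
  rw [List.dedup_eq_self.mpr (List.nodup_range (n := n))]
  apply List.ext_getElem (by simp)
  intro i h1 h2
  simp only [List.getElem_map, List.getElem_range, length_filter_lt_range]
  have : i < n := by simpa using h2
  omega

/-- `p_n`, the identity surjection of `[n]` (0-indexed: the word `0 1 ⋯ (n-1)`). -/
def pWord (n : ℕ) : PW := ⟨List.range n, packed_range n⟩

/-- The set `{n₁, n₁+n₂, …, n₁+⋯+n_{k-1}}` of proper partial sums of a composition. -/
def psumsSet (c : List ℕ) : Finset ℕ :=
  (Finset.range (c.length - 1)).image (fun i => (c.take (i + 1)).sum)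

/-- Iterated `⋄`-product `p_{n₁} ⋄ p_{n₂} ⋄ ⋯ ⋄ p_{n_k}` of identity surjections. -/
def diamondProd (c : List ℕ) : Sj :=
  (c.map (fun m => Finsupp.single (pWord m) (1 : ℚ))).foldr diamond oneSj

/-!
A surjection `h` of `[m + n]` occurs in `p_m ⋄ g` iff its first `m` letters increase and the
remaining ones pack to `g`. In terms of descents, `Desc(h) ⊆ {m} ∪ (I + m)` iff the first `m`
letters increase and the remaining word has its descents in `I`, so
`p_m ⋄ D^n_{⊆I} = D^{m+n}_{⊆ {m} ∪ (I + m)}`. By induction,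
`p_{n₁} ⋄ ⋯ ⋄ p_{n_k} = D^n_{⊆ S}` where `S = {n₁, n₁ + n₂, …, n₁ + ⋯ + n_{k-1}}`. The map
`(n₁, …, n_k) ↦ S` is a bijection from compositions of `n` into `k` parts onto the
`(k - 1)`-subsets of `[n - 1]`, so regrouping the left-hand side by `I = S` turns the
coefficient `(-1)^{k-1}/k` into `(-1)^{|I|}/(|I| + 1)`.
-/

open Finset

section Packing

lemma rank_eq_card (w : List ℕ) (a : ℕ) : rank w a = #(w.toFinset.filter (· < a)) := by
  rw [rank, ← List.toFinset_card_of_nodup (w.nodup_dedup.filter _), List.toFinset_filter]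
  congr 1
  ext
  simp

lemma strictMonoOn_rank (w : List ℕ) : StrictMonoOn (rank w) {a | a ∈ w} := by
  intro a ha b _ hab
  simp only [rank_eq_card]
  refine card_lt_card ⟨fun x hx => ?_, fun hsub => ?_⟩
  · simp only [mem_filter] at hx ⊢
    exact ⟨hx.1, hx.2.trans hab⟩
  · simpa using hsub (mem_filter.mpr ⟨List.mem_toFinset.mpr ha, hab⟩)

lemma rank_lt_length (w : List ℕ) {a : ℕ} (ha : a ∈ w) : rank w a < w.length := by
  rw [rank_eq_card]
  refine (card_lt_card ⟨filter_subset _ _, fun hsub => ?_⟩).trans_le (List.toFinset_card_le w)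
  simpa using hsub (List.mem_toFinset.mpr ha)

lemma Packed.lt_length_of_mem {w : List ℕ} (hw : Packed w) {x : ℕ} (hx : x ∈ w) :
    x < w.length := by
  rw [← hw] at hx
  obtain ⟨a, ha, rfl⟩ := List.mem_map.mp hx
  exact rank_lt_length w ha

lemma pack_length (w : List ℕ) : (pack w).length = w.length := List.length_map _

lemma rank_map_of_strictMonoOn {w : List ℕ} {φ : ℕ → ℕ} (hφ : StrictMonoOn φ {a | a ∈ w})
    {a : ℕ} (ha : a ∈ w) : rank (w.map φ) (φ a) = rank w a := by
  have himage : (w.map φ).toFinset = w.toFinset.image φ := by ext; simp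
  rw [rank_eq_card, rank_eq_card, himage, filter_image,
    card_image_of_injOn (hφ.injOn.mono fun b hb => List.mem_toFinset.mp (mem_filter.mp hb).1)]
  congr 1
  exact filter_congr fun b hb => hφ.lt_iff_lt (List.mem_toFinset.mp hb) ha

lemma pack_map_of_strictMonoOn {w : List ℕ} {φ : ℕ → ℕ} (hφ : StrictMonoOn φ {a | a ∈ w}) :
    pack (w.map φ) = pack w := by
  rw [pack, pack, List.map_map]
  exact List.map_congr_left fun a ha => rank_map_of_strictMonoOn hφ ha

lemma packed_pack (w : List ℕ) : Packed (pack w) :=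
  pack_map_of_strictMonoOn (strictMonoOn_rank w)

end Packing

section Descents

lemma mem_descSet {w : List ℕ} {i : ℕ} :
    i ∈ descSet w ↔ ∃ h : i < w.length, 0 < i ∧ w[i] ≤ w[i - 1] := by
  simp only [descSet, mem_filter, mem_Icc]
  constructor
  · rintro ⟨⟨h1, h2⟩, h⟩
    have hi : i < w.length := by omega
    rw [List.getD_eq_getElem _ _ hi, List.getD_eq_getElem _ _ (by omega)] at h
    exact ⟨hi, h1, h⟩
  · rintro ⟨hi, h1, h⟩
    rw [List.getD_eq_getElem _ _ hi, List.getD_eq_getElem _ _ (by omega)]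
    exact ⟨⟨h1, by omega⟩, h⟩

lemma descSet_subset_Icc (w : List ℕ) : descSet w ⊆ Icc 1 (w.length - 1) := filter_subset _ _

lemma descSet_map_of_strictMonoOn {w : List ℕ} {φ : ℕ → ℕ} (hφ : StrictMonoOn φ {a | a ∈ w}) :
    descSet (w.map φ) = descSet w := by
  ext i
  simp only [mem_descSet, List.length_map, List.getElem_map]
  refine exists_congr fun hi => and_congr_right fun _ => ?_
  exact hφ.le_iff_le (List.getElem_mem hi) (List.getElem_mem _)

lemma descSet_pack (w : List ℕ) : descSet (pack w) = descSet w :=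
  descSet_map_of_strictMonoOn (strictMonoOn_rank w)

lemma descSet_eq_empty_iff {w : List ℕ} : descSet w = ∅ ↔ w.IsChain (· < ·) := by
  simp only [eq_empty_iff_forall_notMem, mem_descSet, List.isChain_iff_getElem, not_exists,
    not_and, not_le]
  constructor
  · intro h i hi
    simpa using h (i + 1) hi (by omega)
  · intro h i hi hpos
    simpa [Nat.sub_add_cancel hpos] using h (i - 1) (by omega)

lemma Packed.eq_range_of_isChain {p : List ℕ} (hp : Packed p) (hchain : p.IsChain (· < ·)) :
    p = List.range p.length := by
  have hsorted : p.Pairwise (· < ·) := List.isChain_iff_pairwise.mp hchain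
  have hletters : p.toFinset = range p.length :=
    eq_of_subset_of_card_le
      (fun x hx => mem_range.mpr (hp.lt_length_of_mem (List.mem_toFinset.mp hx)))
      (by rw [card_range, List.toFinset_card_of_nodup hsorted.nodup])
  refine hsorted.eq_of_mem_iff List.pairwise_lt_range fun a => ?_
  rw [← List.mem_toFinset, hletters, List.mem_range, mem_range]

lemma pack_eq_range_iff {w : List ℕ} : pack w = List.range w.length ↔ descSet w = ∅ := by
  constructor
  · intro h
    rw [← descSet_pack, h, descSet_eq_empty_iff, List.isChain_iff_pairwise]
    exact List.pairwise_lt_range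
  · intro h
    rw [← descSet_pack, descSet_eq_empty_iff] at h
    rw [(packed_pack w).eq_range_of_isChain h, pack_length]

lemma erase_descSet_append (u v : List ℕ) :
    (descSet (u ++ v)).erase u.length = descSet u ∪ (descSet v).image (· + u.length) := by
  ext i
  simp only [mem_erase, mem_union, mem_image, mem_descSet, List.length_append]
  constructor
  · rintro ⟨hne, hi, hpos, hle⟩
    rcases Nat.lt_or_gt_of_ne hne with hlt | hgt
    · left
      refine ⟨hlt, hpos, ?_⟩
      rwa [List.getElem_append_left hlt, List.getElem_append_left (by omega)] at hle
    · right
      refine ⟨i - u.length, ⟨by omega, by omega, ?_⟩, by omega⟩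
      rw [List.getElem_append_right (by omega), List.getElem_append_right (by omega)] at hle
      simpa only [show i - 1 - u.length = i - u.length - 1 by omega] using hle
  · rintro (⟨hi, hpos, hle⟩ | ⟨j, ⟨hj, hpos, hle⟩, rfl⟩)
    · refine ⟨by omega, by omega, hpos, ?_⟩
      rwa [List.getElem_append_left hi, List.getElem_append_left (by omega)]
    · refine ⟨by omega, by omega, by omega, ?_⟩
      rw [List.getElem_append_right (by omega), List.getElem_append_right (by omega)]
      simpa only [show j + u.length - 1 - u.length = j - 1 by omega, Nat.add_sub_cancel] using hle

lemma descSet_append_subset_iff (u v : List ℕ) (I : Finset ℕ) :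
    descSet (u ++ v) ⊆ insert u.length (I.image (· + u.length)) ↔
      descSet u = ∅ ∧ descSet v ⊆ I := by
  rw [subset_insert_iff, erase_descSet_append, union_subset_iff,
    image_subset_image_iff (add_left_injective _), subset_empty.symm]
  refine and_congr_left fun _ => ⟨fun h x hx => ?_, fun h => h.trans (empty_subset _)⟩
  -- elements of `I.image (· + u.length)` are `≥ u.length`, descents of `u` are `< u.length`
  obtain ⟨y, -, rfl⟩ := mem_image.mp (h hx)
  have := mem_Icc.mp (descSet_subset_Icc u hx)
  omega

end Descents

section DiamondProduct

lemma mem_candidates {w : List ℕ} {N : ℕ} :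
    w ∈ candidates N ↔ w.length = N ∧ ∀ x ∈ w, x < N := by
  simp only [candidates, mem_image, mem_univ, true_and]
  constructor
  · rintro ⟨v, rfl⟩
    simp
  · rintro ⟨rfl, hlt⟩
    exact ⟨fun i => ⟨w[i], hlt _ (List.getElem_mem i.isLt)⟩, List.ofFn_getElem⟩

lemma mem_candidates_of_packed {w : List ℕ} (hw : Packed w) : w ∈ candidates w.length :=
  mem_candidates.mpr ⟨rfl, fun _ => hw.lt_length_of_mem⟩

lemma mem_SjWords {g : PW} {n : ℕ} : g ∈ SjWords n ↔ g.1.length = n := by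
  rw [SjWords, mem_subtype, mem_filter]
  constructor
  · rintro ⟨hg, -⟩
    exact (mem_candidates.mp hg).1
  · rintro rfl
    exact ⟨mem_candidates_of_packed g.2, g.2⟩

lemma mem_diamondSet {f g : List ℕ} {h : PW} :
    h ∈ diamondSet f g ↔ h.1.length = f.length + g.length ∧
      pack (h.1.take f.length) = f ∧ pack (h.1.drop f.length) = g := by
  rw [diamondSet, mem_subtype, mem_filter]
  constructor
  · rintro ⟨hh, -, htake, hdrop⟩
    exact ⟨(mem_candidates.mp hh).1, htake, hdrop⟩
  · rintro ⟨hlen, htake, hdrop⟩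
    exact ⟨hlen ▸ mem_candidates_of_packed h.2, h.2, htake, hdrop⟩

lemma diamond_single_sum (f : PW) (S : Finset PW) :
    diamond (Finsupp.single f 1) (∑ g ∈ S, Finsupp.single g 1) = ∑ g ∈ S, diamondPW f g := by
  rw [diamond, Finsupp.sum_single_index (by simp),
    ← Finsupp.sum_finsetSum_index (by simp) (by simp [mul_add, add_smul])]
  refine sum_congr rfl fun g _ => ?_
  simp

lemma descSet_subset_insert_iff {w : List ℕ} {m : ℕ} (hm : m ≤ w.length) (I : Finset ℕ) :
    descSet w ⊆ insert m (I.image (· + m)) ↔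
      pack (w.take m) = List.range m ∧ descSet (pack (w.drop m)) ⊆ I := by
  have hlen : (w.take m).length = m := List.length_take_of_le hm
  have hsplit := descSet_append_subset_iff (w.take m) (w.drop m) I
  rw [List.take_append_drop, hlen] at hsplit
  rw [hsplit, descSet_pack, ← pack_eq_range_iff, hlen]

lemma diamond_pWord_Dsub (m n : ℕ) (I : Finset ℕ) :
    diamond (Finsupp.single (pWord m) 1) (Dsub n I) =
      Dsub (m + n) (insert m (I.image (· + m))) := by
  set S := (SjWords n).filter (fun g => descSet g.1 ⊆ I)
  set T := (SjWords (m + n)).filter (fun h => descSet h.1 ⊆ insert m (I.image (· + m)))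
  let suffix : PW → PW := fun h => ⟨pack (h.1.drop m), packed_pack _⟩
  have hT : ∀ h : PW, h ∈ T ↔ h.1.length = m + n ∧
      pack (h.1.take m) = List.range m ∧ descSet (suffix h).1 ⊆ I := fun h => by
    rw [mem_filter, mem_SjWords]
    exact and_congr_right fun hlen => descSet_subset_insert_iff (by omega) I
  have hmaps : ∀ h ∈ T, suffix h ∈ S := fun h hh => by
    obtain ⟨hlen, -, hdesc⟩ := (hT h).mp hh
    refine mem_filter.mpr ⟨mem_SjWords.mpr ?_, hdesc⟩
    simp only [suffix, pack_length, List.length_drop, hlen, Nat.add_sub_cancel_left]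
  have hfiber : ∀ g ∈ S, diamondSet (pWord m).1 g.1 = T.filter (suffix · = g) := fun g hg => by
    obtain ⟨hglen, hgdesc⟩ := mem_filter.mp hg
    rw [mem_SjWords] at hglen
    ext h
    simp only [mem_diamondSet, mem_filter, hT, pWord, List.length_range, hglen, suffix,
      Subtype.ext_iff]
    constructor
    · rintro ⟨hlen, htake, hdrop⟩
      exact ⟨⟨hlen, htake, hdrop ▸ hgdesc⟩, hdrop⟩
    · rintro ⟨⟨hlen, htake, -⟩, hdrop⟩
      exact ⟨hlen, htake, hdrop⟩
  calc diamond (Finsupp.single (pWord m) 1) (Dsub n I)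
      = ∑ g ∈ S, ∑ h ∈ T with suffix h = g, Finsupp.single h 1 := by
        rw [Dsub, diamond_single_sum]
        exact sum_congr rfl fun g hg => by rw [diamondPW, hfiber g hg]
    _ = Dsub (m + n) (insert m (I.image (· + m))) := sum_fiberwise_of_maps_to hmaps _

lemma Dsub_insert_self (N : ℕ) (J : Finset ℕ) : Dsub N (insert N J) = Dsub N J := by
  refine sum_congr (filter_congr fun f hf => subset_insert_iff_of_notMem fun hN => ?_)
    fun _ _ => rfl
  have := mem_Icc.mp (descSet_subset_Icc f.1 hN)
  rw [mem_SjWords.mp hf] at this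
  omega

lemma Dsub_zero_empty : Dsub 0 ∅ = oneSj := by
  have hwords : SjWords 0 = {emptyPW} := by
    ext f
    rw [mem_SjWords, mem_singleton, List.length_eq_zero_iff, Subtype.ext_iff]
    rfl
  rw [Dsub, hwords, filter_singleton, if_pos (by simp [descSet, emptyPW]), sum_singleton]
  rfl

end DiamondProduct

section Compositions

lemma psumsSet_cons (m : ℕ) {c : List ℕ} (hc : c ≠ []) :
    psumsSet (m :: c) = insert m ((psumsSet c).image (· + m)) := by
  have hlen : 1 ≤ c.length := List.length_pos_iff.mpr hc
  ext a
  simp only [psumsSet, mem_image, mem_range, mem_insert, List.length_cons]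
  constructor
  · rintro ⟨i, hi, rfl⟩
    rw [List.take_succ_cons, List.sum_cons]
    rcases Nat.eq_zero_or_pos i with rfl | hpos
    · simp
    · exact Or.inr ⟨(c.take i).sum, ⟨i - 1, by omega, by rw [Nat.sub_add_cancel hpos]⟩, by omega⟩
  · rintro (rfl | ⟨b, ⟨j, hj, rfl⟩, rfl⟩)
    · exact ⟨0, by omega, by simp⟩
    · exact ⟨j + 1, by omega, by rw [List.take_succ_cons, List.sum_cons]; omega⟩

lemma psumsSet_append_singleton {l : List ℕ} (hl : l ≠ []) (a : ℕ) :
    psumsSet (l ++ [a]) = insert l.sum (psumsSet l) := by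
  have hlen : l.length - 1 + 1 = l.length := Nat.sub_add_cancel (List.length_pos_iff.mpr hl)
  rw [psumsSet, psumsSet, List.length_append, List.length_singleton, Nat.add_sub_cancel, ← hlen,
    range_add_one, image_insert, hlen, List.take_append_of_le_length le_rfl, List.take_length]
  congr 1
  refine image_congr fun i hi => ?_
  rw [List.take_append_of_le_length (by simp at hi; omega)]

variable {l : List ℕ}

lemma psumsSet_subset_Icc (hl : ∀ x ∈ l, 0 < x) : psumsSet l ⊆ Icc 1 (l.sum - 1) := by
  induction l using List.reverseRecOn with
  | nil => exact empty_subset _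
  | append_singleton l a ih =>
    rcases eq_or_ne l [] with rfl | hne
    · exact empty_subset _
    have hpos : ∀ x ∈ l, 0 < x := fun x hx => hl x (by simp [hx])
    have hsum : 0 < l.sum := List.sum_pos l hpos hne
    have ha : 0 < a := hl a (by simp)
    rw [psumsSet_append_singleton hne, List.sum_append, List.sum_singleton]
    refine insert_subset (mem_Icc.mpr ⟨hsum, by omega⟩) ((ih hpos).trans ?_)
    exact Icc_subset_Icc_right (by omega)

lemma sum_notMem_psumsSet (hl : ∀ x ∈ l, 0 < x) : l.sum ∉ psumsSet l := fun h => by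
  have := mem_Icc.mp (psumsSet_subset_Icc hl h)
  omega

lemma card_psumsSet (hl : ∀ x ∈ l, 0 < x) : #(psumsSet l) = l.length - 1 := by
  induction l using List.reverseRecOn with
  | nil => rfl
  | append_singleton l a ih =>
    rcases eq_or_ne l [] with rfl | hne
    · rfl
    have hpos : ∀ x ∈ l, 0 < x := fun x hx => hl x (by simp [hx])
    rw [psumsSet_append_singleton hne, card_insert_of_notMem (sum_notMem_psumsSet hpos), ih hpos,
      List.length_append, List.length_singleton, Nat.add_sub_cancel,
      Nat.sub_add_cancel (List.length_pos_iff.mpr hne)]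

lemma le_sum_of_mem_psumsSet_append_singleton (hl : ∀ x ∈ l, 0 < x) (a : ℕ) {x : ℕ}
    (hx : x ∈ psumsSet (l ++ [a])) : x ≤ l.sum := by
  rcases eq_or_ne l [] with rfl | hne
  · simp [psumsSet] at hx
  rw [psumsSet_append_singleton hne, mem_insert] at hx
  rcases hx with rfl | hx
  · exact le_rfl
  · exact (mem_Icc.mp (psumsSet_subset_Icc hl hx)).2.trans (Nat.sub_le _ _)

lemma psumsSet_eq_erase (hl : ∀ x ∈ l, 0 < x) (a : ℕ) :
    psumsSet l = (psumsSet (l ++ [a])).erase l.sum := by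
  rcases eq_or_ne l [] with rfl | hne
  · rfl
  · rw [psumsSet_append_singleton hne, erase_insert (sum_notMem_psumsSet hl)]

lemma eq_of_psumsSet_eq {l₁ l₂ : List ℕ} (h₁ : ∀ x ∈ l₁, 0 < x) (h₂ : ∀ x ∈ l₂, 0 < x)
    (hsum : l₁.sum = l₂.sum) (hps : psumsSet l₁ = psumsSet l₂) : l₁ = l₂ := by
  induction l₁ using List.reverseRecOn generalizing l₂ with
  | nil =>
    by_contra hne
    exact (List.sum_pos l₂ h₂ (Ne.symm hne)).ne' hsum.symm
  | append_singleton l a ih =>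
    have hpos : ∀ x ∈ l, 0 < x := fun x hx => h₁ x (by simp [hx])
    have ha : 0 < a := h₁ a (by simp)
    obtain ⟨l', b, rfl⟩ : ∃ l' b, l₂ = l' ++ [b] := by
      refine (List.eq_nil_or_concat' l₂).resolve_left fun hnil => ?_
      simp [hnil] at hsum
      omega
    have hpos' : ∀ x ∈ l', 0 < x := fun x hx => h₂ x (by simp [hx])
    simp only [List.sum_append, List.sum_singleton] at hsum
    -- `l.sum` is the largest partial sum of `l ++ [a]`
    have hsum_le : ∀ {L L' : List ℕ} {c c' : ℕ}, (∀ x ∈ L', 0 < x) →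
        psumsSet (L ++ [c]) = psumsSet (L' ++ [c']) → L.sum ≤ L'.sum := by
      intro L L' c c' hL' h
      rcases eq_or_ne L [] with rfl | hne
      · exact Nat.zero_le _
      · refine le_sum_of_mem_psumsSet_append_singleton hL' c' ?_
        rw [← h, psumsSet_append_singleton hne]
        exact mem_insert_self _ _
    have hlast : l.sum = l'.sum := le_antisymm (hsum_le hpos' hps) (hsum_le hpos hps.symm)
    have hinit : l = l' := by
      refine ih hpos hpos' hlast ?_
      rw [psumsSet_eq_erase hpos a, psumsSet_eq_erase hpos' b, hps, hlast]
    subst hinit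
    rw [show a = b by omega]

lemma exists_psumsSet_eq {I : Finset ℕ} {N : ℕ} (hI : I ⊆ Icc 1 (N - 1)) :
    ∃ l : List ℕ, (∀ x ∈ l, 0 < x) ∧ l.sum = N ∧ psumsSet l = I := by
  induction I using Finset.induction_on_max generalizing N with
  | empty =>
    rcases Nat.eq_zero_or_pos N with rfl | hN
    · exact ⟨[], by simp, rfl, rfl⟩
    · exact ⟨[N], by simpa using hN, by simp, rfl⟩
  | insert a s hlt ih =>
    have ha := mem_Icc.mp (hI (mem_insert_self a s))
    obtain ⟨l, hpos, hsum, hps⟩ := ih (N := a) fun x hx =>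
      mem_Icc.mpr ⟨(mem_Icc.mp (hI (mem_insert_of_mem hx))).1, by have := hlt x hx; omega⟩
    have hne : l ≠ [] := by rintro rfl; simp at hsum; omega
    refine ⟨l ++ [N - a], fun x hx => ?_, by simp [hsum]; omega, ?_⟩
    · rcases List.mem_append.mp hx with hx | hx
      · exact hpos x hx
      · rw [List.mem_singleton.mp hx]; omega
    · rw [psumsSet_append_singleton hne, hsum, hps]

end Compositions

lemma diamondProd_eq_Dsub {c : List ℕ} (hc : ∀ x ∈ c, 0 < x) :
    diamondProd c = Dsub c.sum (psumsSet c) := by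
  induction c with
  | nil => exact Dsub_zero_empty.symm
  | cons m c ih =>
    have hstep : diamondProd (m :: c) = diamond (Finsupp.single (pWord m) 1) (diamondProd c) := rfl
    rw [hstep, ih fun x hx => hc x (List.mem_cons_of_mem m hx), diamond_pWord_Dsub, List.sum_cons]
    rcases eq_or_ne c [] with rfl | hne
    · exact Dsub_insert_self m ∅
    · rw [psumsSet_cons m hne]

lemma mem_filter_antidiagonalTuple_pos {k n : ℕ} {c : Fin k → ℕ} :
    c ∈ (Nat.antidiagonalTuple k n).filter (fun c => ∀ i, 0 < c i) ↔
      (∀ x ∈ List.ofFn c, 0 < x) ∧ (List.ofFn c).sum = n := by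
  simp [Nat.mem_antidiagonalTuple, List.sum_ofFn, List.mem_ofFn, and_comm]

lemma sum_compositions_eq_sum_subsets {M : Type*} [AddCommMonoid M] (F : Finset ℕ → M) {n : ℕ}
    (hn : 1 ≤ n) (k : ℕ) :
    ∑ c ∈ (Nat.antidiagonalTuple k n).filter (fun c => ∀ i, 0 < c i), F (psumsSet (List.ofFn c)) =
      ∑ I ∈ (Icc 1 (n - 1)).powerset with I.card + 1 = k, F I := by
  have hne : ∀ {l : List ℕ}, l.sum = n → l ≠ [] := by rintro l hsum rfl; simp at hsum; omega
  refine sum_bij (fun c _ => psumsSet (List.ofFn c)) ?_ ?_ ?_ fun _ _ => rfl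
  · intro c hc
    obtain ⟨hpos, hsum⟩ := mem_filter_antidiagonalTuple_pos.mp hc
    refine mem_filter.mpr ⟨mem_powerset.mpr (hsum ▸ psumsSet_subset_Icc hpos), ?_⟩
    rw [card_psumsSet hpos, Nat.sub_add_cancel (List.length_pos_iff.mpr (hne hsum)),
      List.length_ofFn]
  · intro c₁ hc₁ c₂ hc₂ h
    obtain ⟨hpos₁, hsum₁⟩ := mem_filter_antidiagonalTuple_pos.mp hc₁
    obtain ⟨hpos₂, hsum₂⟩ := mem_filter_antidiagonalTuple_pos.mp hc₂
    exact List.ofFn_injective (eq_of_psumsSet_eq hpos₁ hpos₂ (hsum₁.trans hsum₂.symm) h)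
  · intro I hI
    obtain ⟨hsub, hcard⟩ := mem_filter.mp hI
    obtain ⟨l, hpos, hsum, rfl⟩ := exists_psumsSet_eq (mem_powerset.mp hsub)
    obtain rfl : l.length = k := by
      rw [← hcard, card_psumsSet hpos, Nat.sub_add_cancel (List.length_pos_iff.mpr (hne hsum))]
    refine ⟨l.get, mem_filter_antidiagonalTuple_pos.mpr ?_, ?_⟩ <;> rw [List.ofFn_get]
    exact ⟨hpos, hsum⟩

/-- For every `n ≥ 1`, the degree-`n` component of `log (∑_{m≥0} p_m)`
in `(𝐒𝐣, ⋄)`, i.e. `∑_{k=1}^n ((-1)^{k-1}/k) ∑_{(n₁,…,n_k) ⊨ n} p_{n₁} ⋄ ⋯ ⋄ p_{n_k}`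
(the inner sum ranging over all compositions of `n` into `k` positive parts), equals
`∑_{I ⊆ [n-1]} ((-1)^{|I|}/(|I|+1)) · D^n_{⊆ I}`. -/
theorem log_component_eq_sum_Dsub (n : ℕ) (hn : 1 ≤ n) :
    ∑ k ∈ Finset.Icc 1 n, ((-1 : ℚ) ^ (k - 1) / (k : ℚ)) •
        ∑ c ∈ (Finset.Nat.antidiagonalTuple k n).filter (fun c => ∀ i, 0 < c i),
          diamondProd (List.ofFn c)
      = ∑ I ∈ (Finset.Icc 1 (n - 1)).powerset,
          ((-1 : ℚ) ^ I.card / ((I.card : ℚ) + 1)) • Dsub n I := by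
  have hmaps : ∀ I ∈ (Icc 1 (n - 1)).powerset, I.card + 1 ∈ Icc 1 n := fun I hI => by
    have := card_le_card (mem_powerset.mp hI)
    rw [Nat.card_Icc] at this
    exact mem_Icc.mpr ⟨by omega, by omega⟩
  rw [← sum_fiberwise_of_maps_to hmaps]
  refine sum_congr rfl fun k _ => ?_
  have hcoef : ∀ I ∈ (Icc 1 (n - 1)).powerset.filter (fun I => I.card + 1 = k),
      ((-1 : ℚ) ^ I.card / ((I.card : ℚ) + 1)) • Dsub n I =
        ((-1 : ℚ) ^ (k - 1) / (k : ℚ)) • Dsub n I := fun I hI => by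
    rw [← (mem_filter.mp hI).2, Nat.add_sub_cancel, Nat.cast_succ]
  rw [sum_congr rfl hcoef, ← smul_sum, ← sum_compositions_eq_sum_subsets (Dsub n) hn k]
  refine congrArg _ (sum_congr rfl fun c hc => ?_)
  obtain ⟨hpos, hsum⟩ := mem_filter_antidiagonalTuple_pos.mp hc
  rw [diamondProd_eq_Dsub hpos, hsum]

end
end

section
/- The operations ↑, ↓, •, ⧢ on T(A) satisfy the half-shuffle axiom (x ↑ y) ↑ z = x ↑ (y ⧢ z) for all nonempty words x, y, z ∈ T(A) (extended bilinearly), where y ⧢ z = y↑z + y↓z + y•z. -/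
/-!
Since `x a ↑ y = (x ⧢ y) a` and `y ⧢ z` is again a combination of nonempty words,
`(x a ↑ y) ↑ z = ((x ⧢ y) ⧢ z) a` and `x a ↑ (y ⧢ z) = (x ⧢ (y ⧢ z)) a`: the half-shuffle axiom
is the associativity of `⧢`. By linearity it suffices to check associativity on words, by
induction on the total length: expanding `⧢` along the last letters turns each side into seven
terms, which match by induction and by the associativity of `∗`.
-/

open scoped Classical

noncomputable section

variable {A : Type*} [AddCommGroup A] [Module ℚ A]

/-- The word `a₁⋯a_n` as an element of the tensor module
`T(A) = ⊕_{n ≥ 0} A^{⊗n}`, realized as the tensor algebra of the module `A`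
(its product is concatenation of words). -/
def word (l : List A) : TensorAlgebra ℚ A :=
  (l.map fun a => TensorAlgebra.ι ℚ a).prod

/-- The span of the nonempty words: the bilinear extension of statements about
half-shuffles of nonempty words holds on this submodule of `T(A)`. -/
def augWords : Submodule ℚ (TensorAlgebra ℚ A) :=
  Submodule.span ℚ {x | ∃ l : List A, l ≠ [] ∧ x = word l}

local notation "ι" => TensorAlgebra.ι ℚ

lemma word_nil : word ([] : List A) = 1 := rfl

lemma word_append (l m : List A) : word (l ++ m) = word l * word m := by
  simp [word]

lemma word_singleton (a : A) : word [a] = ι a := by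
  simp [word]

lemma word_concat (l : List A) (a : A) : word (l ++ [a]) = word l * ι a := by
  rw [word_append, word_singleton]

lemma span_range_word :
    Submodule.span ℚ (Set.range (word : List A → TensorAlgebra ℚ A)) = ⊤ := by
  refine top_unique fun x _ => ?_
  refine TensorAlgebra.induction (fun r => ?_) (fun a => ?_) (fun x y hx hy => ?_)
    (fun x y hx hy => add_mem hx hy) x
  · rw [Algebra.algebraMap_eq_smul_one, ← word_nil]
    exact Submodule.smul_mem _ r (Submodule.subset_span ⟨[], rfl⟩)
  · exact Submodule.subset_span ⟨[a], word_singleton a⟩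
  · have hxy := Submodule.mul_mem_mul hx hy
    rw [Submodule.span_mul_span] at hxy
    refine Submodule.span_mono ?_ hxy
    rintro _ ⟨_, ⟨l, rfl⟩, _, ⟨m, rfl⟩, rfl⟩
    exact ⟨l ++ m, word_append l m⟩

@[elab_as_elim]
theorem word_induction {p : TensorAlgebra ℚ A → Prop} (word : ∀ l, p (word l))
    (add : ∀ x y, p x → p y → p (x + y)) (smul : ∀ (r : ℚ) x, p x → p (r • x))
    (x : TensorAlgebra ℚ A) : p x := by
  have hx : x ∈ Submodule.span ℚ (Set.range (_root_.word : List A → TensorAlgebra ℚ A)) := by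
    simp [span_range_word]
  induction hx using Submodule.span_induction with
  | mem x hx => obtain ⟨l, rfl⟩ := hx; exact word l
  | zero => simpa using smul 0 _ (word [])
  | add x y _ _ hx hy => exact add x y hx hy
  | smul r x _ hx => exact smul r x hx

lemma word_concat_mem_augWords (l : List A) (a : A) : word (l ++ [a]) ∈ augWords :=
  Submodule.subset_span ⟨l ++ [a], by simp, rfl⟩

@[elab_as_elim]
theorem augWords_induction {p : (x : TensorAlgebra ℚ A) → x ∈ augWords → Prop}
    (concat : ∀ l a, p (word (l ++ [a])) (word_concat_mem_augWords l a))
    (add : ∀ x y hx hy, p x hx → p y hy → p (x + y) (add_mem hx hy))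
    (smul : ∀ (r : ℚ) x hx, p x hx → p (r • x) (Submodule.smul_mem _ r hx))
    {x : TensorAlgebra ℚ A} (hx : x ∈ augWords) : p x hx := by
  induction hx using Submodule.span_induction with
  | mem x hx =>
    obtain ⟨l, hl, rfl⟩ := hx
    obtain ⟨l, a, rfl⟩ := (List.eq_nil_or_concat' l).resolve_left hl
    exact concat l a
  | zero => simpa using smul 0 _ _ (concat [] 0)
  | add x y _ _ hx hy => exact add x y _ _ hx hy
  | smul r x _ hx => exact smul r x _ hx

lemma mul_ι_mem_augWords (u : TensorAlgebra ℚ A) (a : A) : u * ι a ∈ augWords := by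
  induction u using word_induction with
  | word l => rw [← word_concat]; exact word_concat_mem_augWords l a
  | add u v hu hv => rw [add_mul]; exact add_mem hu hv
  | smul r u hu => rw [smul_mul_assoc]; exact Submodule.smul_mem _ r hu

structure IsQuasiShuffle (mul : A →ₗ[ℚ] A →ₗ[ℚ] A)
    (sh : TensorAlgebra ℚ A →ₗ[ℚ] TensorAlgebra ℚ A →ₗ[ℚ] TensorAlgebra ℚ A) : Prop where
  one_left : ∀ x, sh 1 x = x
  one_right : ∀ x, sh x 1 = x
  concat_concat : ∀ (l m : List A) (a b : A),
    sh (word (l ++ [a])) (word (m ++ [b])) = sh (word l) (word (m ++ [b])) * ι a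
      + sh (word (l ++ [a])) (word m) * ι b + sh (word l) (word m) * ι (mul a b)

namespace IsQuasiShuffle

variable {mul : A →ₗ[ℚ] A →ₗ[ℚ] A}
  {sh : TensorAlgebra ℚ A →ₗ[ℚ] TensorAlgebra ℚ A →ₗ[ℚ] TensorAlgebra ℚ A}
  (h : IsQuasiShuffle mul sh)
include h

theorem mul_ι_mul_ι (u v : TensorAlgebra ℚ A) (a b : A) :
    sh (u * ι a) (v * ι b)
      = sh u (v * ι b) * ι a + sh (u * ι a) v * ι b + sh u v * ι (mul a b) := by
  induction u using word_induction with
  | word l =>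
    induction v using word_induction with
    | word m => simpa only [word_concat] using h.concat_concat l m a b
    | add v w hv hw => simp only [add_mul, map_add, hv, hw]; abel
    | smul r v hv => simp only [smul_mul_assoc, map_smul, hv, smul_add]
  | add u w hu hw => simp only [add_mul, map_add, LinearMap.add_apply, hu, hw]; abel
  | smul r u hu => simp only [smul_mul_assoc, map_smul, LinearMap.smul_apply, hu, smul_add]

theorem sh_mul_ι_mul_ι_mul_ι (u v w : TensorAlgebra ℚ A) (a b c : A) :
    sh (sh (u * ι a) (v * ι b)) (w * ι c)
      = sh (sh u (v * ι b)) (w * ι c) * ι a + sh (sh (u * ι a) v) (w * ι c) * ι b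
        + sh (sh u v) (w * ι c) * ι (mul a b) + sh (sh (u * ι a) (v * ι b)) w * ι c
        + sh (sh u (v * ι b)) w * ι (mul a c) + sh (sh (u * ι a) v) w * ι (mul b c)
        + sh (sh u v) w * ι (mul (mul a b) c) := by
  rw [h.mul_ι_mul_ι u v a b]
  simp only [map_add, LinearMap.add_apply, add_mul, h.mul_ι_mul_ι _ w _ c]
  abel

theorem mul_ι_sh_mul_ι_mul_ι (u v w : TensorAlgebra ℚ A) (a b c : A) :
    sh (u * ι a) (sh (v * ι b) (w * ι c))
      = sh u (sh (v * ι b) (w * ι c)) * ι a + sh (u * ι a) (sh v (w * ι c)) * ι b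
        + sh u (sh v (w * ι c)) * ι (mul a b) + sh (u * ι a) (sh (v * ι b) w) * ι c
        + sh u (sh (v * ι b) w) * ι (mul a c) + sh (u * ι a) (sh v w) * ι (mul b c)
        + sh u (sh v w) * ι (mul a (mul b c)) := by
  rw [h.mul_ι_mul_ι v w b c]
  simp only [map_add, add_mul, h.mul_ι_mul_ι u _ a _]
  abel

theorem sh_mem_augWords {y z : TensorAlgebra ℚ A} (hy : y ∈ augWords) (hz : z ∈ augWords) :
    sh y z ∈ augWords := by
  induction hy using augWords_induction with
  | add y y' _ _ hy hy' => simp only [map_add, LinearMap.add_apply]; exact add_mem hy hy'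
  | smul r y _ hy =>
    simp only [map_smul, LinearMap.smul_apply]; exact Submodule.smul_mem _ r hy
  | concat l a =>
  induction hz using augWords_induction with
  | add z z' _ _ hz hz' => rw [map_add]; exact add_mem hz hz'
  | smul r z _ hz => rw [map_smul]; exact Submodule.smul_mem _ r hz
  | concat m b =>
    rw [h.concat_concat]
    exact add_mem (add_mem (mul_ι_mem_augWords _ a) (mul_ι_mem_augWords _ b))
      (mul_ι_mem_augWords _ _)

variable (hmul : ∀ a b c : A, mul (mul a b) c = mul a (mul b c))
include hmul

theorem assoc_word (l m n : List A) :
    sh (sh (word l) (word m)) (word n) = sh (word l) (sh (word m) (word n)) := by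
  -- `hl`, `hm`, `hn` are not substituted: `decreasing_by` needs them.
  rcases l.eq_nil_or_concat' with rfl | ⟨l', a, hl⟩
  · simp only [word_nil, h.one_left]
  rcases m.eq_nil_or_concat' with rfl | ⟨m', b, hm⟩
  · simp only [word_nil, h.one_left, h.one_right]
  rcases n.eq_nil_or_concat' with rfl | ⟨n', c, hn⟩
  · simp only [word_nil, h.one_right]
  rw [hl, hm, hn]
  simp only [word_concat, h.sh_mul_ι_mul_ι_mul_ι, h.mul_ι_sh_mul_ι_mul_ι, hmul]
  simp only [← word_concat]
  rw [assoc_word l' (m' ++ [b]) (n' ++ [c]), assoc_word (l' ++ [a]) m' (n' ++ [c]),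
    assoc_word l' m' (n' ++ [c]), assoc_word (l' ++ [a]) (m' ++ [b]) n',
    assoc_word l' (m' ++ [b]) n', assoc_word (l' ++ [a]) m' n', assoc_word l' m' n']
termination_by l.length + m.length + n.length
decreasing_by all_goals subst hl hm hn; simp only [List.length_append, List.length_singleton]; omega

theorem assoc (x y z : TensorAlgebra ℚ A) : sh (sh x y) z = sh x (sh y z) := by
  induction x using word_induction with
  | add x x' hx hx' => simp only [map_add, LinearMap.add_apply, hx, hx']
  | smul r x hx => simp only [map_smul, LinearMap.smul_apply, hx]
  | word l =>
  induction y using word_induction with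
  | add y y' hy hy' => simp only [map_add, LinearMap.add_apply, hy, hy']
  | smul r y hy => simp only [map_smul, LinearMap.smul_apply, hy]
  | word m =>
  induction z using word_induction with
  | add z z' hz hz' => simp only [map_add, hz, hz']
  | smul r z hz => simp only [map_smul, hz]
  | word n => exact h.assoc_word hmul l m n

end IsQuasiShuffle

theorem up_mul_ι {up sh : TensorAlgebra ℚ A →ₗ[ℚ] TensorAlgebra ℚ A →ₗ[ℚ] TensorAlgebra ℚ A}
    (hup : ∀ (l m : List A) (a b : A),
      up (word (l ++ [a])) (word (m ++ [b])) = sh (word l) (word (m ++ [b])) * ι a)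
    (u : TensorAlgebra ℚ A) (a : A) {v : TensorAlgebra ℚ A} (hv : v ∈ augWords) :
    up (u * ι a) v = sh u v * ι a := by
  induction hv using augWords_induction with
  | add v v' _ _ hv hv' => simp only [map_add, add_mul, hv, hv']
  | smul r v _ hv => simp only [map_smul, smul_mul_assoc, hv]
  | concat m b =>
  induction u using word_induction with
  | add u u' hu hu' => simp only [add_mul, map_add, LinearMap.add_apply, hu, hu']
  | smul r u hu => simp only [smul_mul_assoc, map_smul, LinearMap.smul_apply, hu]
  | word l => rw [← word_concat, hup]

theorem quasiShuffle_halfShuffle_axiom_general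
    (mul : A →ₗ[ℚ] A →ₗ[ℚ] A)
    (hmul_assoc : ∀ a b c : A, mul (mul a b) c = mul a (mul b c))
    (up down bul sh :
      TensorAlgebra ℚ A →ₗ[ℚ] TensorAlgebra ℚ A →ₗ[ℚ] TensorAlgebra ℚ A)
    (hsh_one_left : ∀ x, sh 1 x = x)
    (hsh_one_right : ∀ x, sh x 1 = x)
    (hsh_sum : ∀ (l m : List A) (a b : A),
      sh (word (l ++ [a])) (word (m ++ [b]))
        = up (word (l ++ [a])) (word (m ++ [b]))
          + down (word (l ++ [a])) (word (m ++ [b]))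
          + bul (word (l ++ [a])) (word (m ++ [b])))
    (hup : ∀ (l m : List A) (a b : A),
      up (word (l ++ [a])) (word (m ++ [b]))
        = sh (word l) (word (m ++ [b])) * TensorAlgebra.ι ℚ a)
    (hdown : ∀ (l m : List A) (a b : A),
      down (word (l ++ [a])) (word (m ++ [b]))
        = sh (word (l ++ [a])) (word m) * TensorAlgebra.ι ℚ b)
    (hbul : ∀ (l m : List A) (a b : A),
      bul (word (l ++ [a])) (word (m ++ [b]))
        = sh (word l) (word m) * TensorAlgebra.ι ℚ (mul a b))
    : ∀ x ∈ (augWords : Submodule ℚ (TensorAlgebra ℚ A)), ∀ y ∈ (augWords : Submodule ℚ (TensorAlgebra ℚ A)),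
      ∀ z ∈ (augWords : Submodule ℚ (TensorAlgebra ℚ A)),
        up (up x y) z = up x (sh y z) := by
  have h : IsQuasiShuffle mul sh :=
    ⟨hsh_one_left, hsh_one_right, fun l m a b => by rw [hsh_sum, hup, hdown, hbul]⟩
  intro x hx y hy z hz
  induction hx using augWords_induction with
  | add x x' _ _ hx hx' => simp only [map_add, LinearMap.add_apply, hx, hx']
  | smul r x _ hx => simp only [map_smul, LinearMap.smul_apply, hx]
  | concat l a =>
    rw [word_concat, up_mul_ι hup _ _ hy, up_mul_ι hup _ _ hz,
      up_mul_ι hup _ _ (h.sh_mem_augWords hy hz), h.assoc hmul_assoc]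

/-- The operations `↑`, `↓`, `•`, `⧢` on `T(A)` satisfy the half-shuffle
axiom `(x ↑ y) ↑ z = x ↑ (y ⧢ z)` for all nonempty words `x, y, z`, extended bilinearly
(i.e., for all `x, y, z` in the span of the nonempty words), where `y ⧢ z = y↑z + y↓z + y•z`. -/
theorem quasiShuffle_halfShuffle_axiom
    (mul : A →ₗ[ℚ] A →ₗ[ℚ] A)
    (hmul_comm : ∀ a b : A, mul a b = mul b a)
    (hmul_assoc : ∀ a b c : A, mul (mul a b) c = mul a (mul b c))
    (up down bul sh :
      TensorAlgebra ℚ A →ₗ[ℚ] TensorAlgebra ℚ A →ₗ[ℚ] TensorAlgebra ℚ A)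
    (hsh_one_left : ∀ x, sh 1 x = x)
    (hsh_one_right : ∀ x, sh x 1 = x)
    (hsh_sum : ∀ (l m : List A) (a b : A),
      sh (word (l ++ [a])) (word (m ++ [b]))
        = up (word (l ++ [a])) (word (m ++ [b]))
          + down (word (l ++ [a])) (word (m ++ [b]))
          + bul (word (l ++ [a])) (word (m ++ [b])))
    (hup : ∀ (l m : List A) (a b : A),
      up (word (l ++ [a])) (word (m ++ [b]))
        = sh (word l) (word (m ++ [b])) * TensorAlgebra.ι ℚ a)
    (hdown : ∀ (l m : List A) (a b : A),
      down (word (l ++ [a])) (word (m ++ [b]))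
        = sh (word (l ++ [a])) (word m) * TensorAlgebra.ι ℚ b)
    (hbul : ∀ (l m : List A) (a b : A),
      bul (word (l ++ [a])) (word (m ++ [b]))
        = sh (word l) (word m) * TensorAlgebra.ι ℚ (mul a b))
    : ∀ x ∈ (augWords : Submodule ℚ (TensorAlgebra ℚ A)), ∀ y ∈ (augWords : Submodule ℚ (TensorAlgebra ℚ A)),
      ∀ z ∈ (augWords : Submodule ℚ (TensorAlgebra ℚ A)),
        up (up x y) z = up x (sh y z) :=
  quasiShuffle_halfShuffle_axiom_general mul hmul_assoc up down bul sh hsh_one_left hsh_one_right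
    hsh_sum hup hdown hbul
end
end
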